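/- For any k-sparse target function f : X → Bool, any distribution D on X, and m ≥ C·k/ε samples (for a suitable absolute constant C), the hypothesis h_S(x) := [ (x,1) ∈ S ] computed from an i.i.d. sample S of size m labeled by f satisfies error_D(f, h_S) ≤ ε with probability at least 2/3. -/
import Mathlib


open Finset

/-- `error_D(f,h) = Pr_{x∼D}[f(x) ≠ h(x)]`. -/
noncomputable def errD {X : Type} [Fintype X] [DecidableEq X]
    (D : X → ℝ) (f h : X → Bool) : ℝ :=
  ∑ x ∈ univ.filter (fun x => f x ≠ h x), D x

/-- Key scalar inequality: `m · p · (1-p)^m ≤ 1` for `0 ≤ p ≤ 1`. -/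
lemma sparse_aux_scalar {p : ℝ} (hp0 : 0 ≤ p) (hp1 : p ≤ 1) (m : ℕ) :
    (m : ℝ) * (p * (1 - p) ^ m) ≤ 1 := by
  have hq : (0 : ℝ) ≤ 1 - p := by linarith
  have hqm : (0 : ℝ) ≤ (1 - p) ^ m := pow_nonneg hq m
  have h1 : (m : ℝ) * (p * (1 - p) ^ m) ≤ (1 + (m : ℝ) * p) * (1 - p) ^ m := by
    nlinarith
  have h2 : (1 + (m : ℝ) * p) ≤ (1 + p) ^ m := one_add_mul_le_pow (by linarith) m
  have h3 : (1 + p) ^ m * (1 - p) ^ m = (1 - p ^ 2) ^ m := by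
    rw [← mul_pow]; ring_nf
  have h4 : (1 - p ^ 2) ^ m ≤ 1 := by
    apply pow_le_one₀ <;> nlinarith
  nlinarith [mul_le_mul_of_nonneg_right h2 hqm]

/-- Markov-type step over a finite weighted space. -/
lemma sparse_aux_markov {α : Type} [Fintype α] (w g : α → ℝ)
    (hw : ∀ a, 0 ≤ w a) (hsum : ∑ a, w a = 1) (hg : ∀ a, 0 ≤ g a)
    (ε B : ℝ) (hε : 0 < ε) (hE : ∑ a, w a * g a ≤ B) (hB : B ≤ ε / 3) :
    2 / 3 ≤ ∑ a ∈ univ.filter (fun a => g a ≤ ε), w a := by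
  classical
  have hsplit := Finset.sum_filter_add_sum_filter_not univ (fun a => g a ≤ ε) w
  have hT1 : ∑ a ∈ univ.filter (fun a => ¬ g a ≤ ε), ε * w a
      ≤ ∑ a ∈ univ.filter (fun a => ¬ g a ≤ ε), w a * g a := by
    apply Finset.sum_le_sum
    intro a ha
    have h := (Finset.mem_filter.mp ha).2
    push_neg at h
    nlinarith [hw a]
  have hT2 : ∑ a ∈ univ.filter (fun a => ¬ g a ≤ ε), w a * g a
      ≤ ∑ a, w a * g a :=
    Finset.sum_le_sum_of_subset_of_nonneg (Finset.filter_subset _ _)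
      (fun a _ _ => mul_nonneg (hw a) (hg a))
  rw [← Finset.mul_sum] at hT1
  have hTle : ∑ a ∈ univ.filter (fun a => ¬ g a ≤ ε), w a ≤ 1 / 3 := by
    have hεT : ε * ∑ a ∈ univ.filter (fun a => ¬ g a ≤ ε), w a ≤ ε / 3 := by
      linarith
    nlinarith
  linarith

/-- There is an absolute constant `C₀` such that for any `k`-sparse target `f`,
any distribution `D`, and `m ≥ C₀·k/ε` i.i.d. samples, the hypothesis
`h_S(x) = [(x,1) ∈ S]` has `error_D ≤ ε` with probability at least `2/3`. -/
theorem sparse_learner_pac :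
    ∃ C₀ : ℝ, 0 < C₀ ∧
      ∀ (X : Type) [Fintype X] [DecidableEq X] (f : X → Bool) (k : ℕ),
        (univ.filter (fun x => f x = true)).card ≤ k →
        ∀ (D : X → ℝ), (∀ x, 0 ≤ D x) → (∑ x, D x = 1) →
        ∀ (ε : ℝ), 0 < ε →
        ∀ (m : ℕ), C₀ * k / ε ≤ (m : ℝ) →
          (2 : ℝ) / 3 ≤
            ∑ xs ∈ (univ : Finset (Fin m → X)).filter (fun xs =>
                errD D f
                  (fun x => decide (∃ j, xs j = x ∧ f x = true)) ≤ ε),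
              ∏ j, D (xs j) := by
  classical
  refine ⟨3, by norm_num, ?_⟩
  intro X _ _ f k hk D hD0 hD1 ε hε m hm
  set A := univ.filter (fun x : X => f x = true) with hA
  -- total weight is 1
  have hW1 : ∑ xs : Fin m → X, ∏ j, D (xs j) = 1 := by
    rw [← Fintype.piFinset_univ, ← Finset.prod_univ_sum]
    simp [hD1]
  have hDle1 : ∀ x : X, D x ≤ 1 := by
    intro x
    have := Finset.single_le_sum (f := D) (fun y _ => hD0 y) (Finset.mem_univ x)
    linarith [hD1 ▸ this]
  -- error characterization
  have herr : ∀ xs : Fin m → X,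
      errD D f (fun x => decide (∃ j, xs j = x ∧ f x = true))
        = ∑ x ∈ A, (if ∀ j, xs j ≠ x then D x else 0) := by
    intro xs
    unfold errD
    rw [← Finset.sum_filter]
    congr 1
    ext x
    simp only [hA, Finset.mem_filter, Finset.mem_univ, true_and, ne_eq]
    cases hfx : f x <;> simp [hfx]
  have herr_nonneg : ∀ xs : Fin m → X,
      0 ≤ errD D f (fun x => decide (∃ j, xs j = x ∧ f x = true)) := by
    intro xs
    rw [herr]
    apply Finset.sum_nonneg
    intro x _
    split
    · exact hD0 x
    · exact le_refl 0
  by_cases hAe : A = ∅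
  · -- no positive points; error is always 0
    have h0 : ∀ xs : Fin m → X,
        errD D f (fun x => decide (∃ j, xs j = x ∧ f x = true)) ≤ ε := by
      intro xs
      rw [herr, hAe]
      simpa using le_of_lt hε
    rw [Finset.filter_true_of_mem (fun xs _ => h0 xs), hW1]
    norm_num
  · -- A nonempty, hence k ≥ 1 and m ≥ 1
    have hk1 : 1 ≤ k := by
      have : 0 < A.card := Finset.card_pos.mpr (Finset.nonempty_iff_ne_empty.mpr hAe)
      omega
    have hm1 : 0 < m := by
      by_contra h
      push_neg at h
      interval_cases m
      have : (0:ℝ) < 3 * (k:ℝ) / ε := by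
        apply div_pos (by positivity) hε
      simp at hm
      linarith
    have hmR : (0:ℝ) < m := by exact_mod_cast hm1
    -- expected error bound
    have hE : ∑ xs : Fin m → X, (∏ j, D (xs j)) *
        errD D f (fun x => decide (∃ j, xs j = x ∧ f x = true)) ≤ (k : ℝ) / m := by
      have step1 : ∑ xs : Fin m → X, (∏ j, D (xs j)) *
          errD D f (fun x => decide (∃ j, xs j = x ∧ f x = true))
          = ∑ x ∈ A, D x * (1 - D x) ^ m := by
        calc ∑ xs : Fin m → X, (∏ j, D (xs j)) *
              errD D f (fun x => decide (∃ j, xs j = x ∧ f x = true))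
            = ∑ xs : Fin m → X, ∑ x ∈ A,
                (if ∀ j, xs j ≠ x then (∏ j, D (xs j)) * D x else 0) := by
              apply Finset.sum_congr rfl
              intro xs _
              rw [herr, Finset.mul_sum]
              apply Finset.sum_congr rfl
              intro x _
              split <;> ring
          _ = ∑ x ∈ A, ∑ xs : Fin m → X,
                (if ∀ j, xs j ≠ x then (∏ j, D (xs j)) * D x else 0) :=
              Finset.sum_comm
          _ = ∑ x ∈ A, D x * (1 - D x) ^ m := by
              apply Finset.sum_congr rfl
              intro x _
              rw [← Finset.sum_filter]
              have hset : (univ : Finset (Fin m → X)).filter (fun xs => ∀ j, xs j ≠ x)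
                  = Fintype.piFinset (fun _ : Fin m => univ.erase x) := by
                ext xs
                simp [Fintype.mem_piFinset]
              rw [hset, ← Finset.sum_mul, ← Finset.prod_univ_sum]
              have hsum_erase : ∑ y ∈ univ.erase x, D y = 1 - D x := by
                rw [Finset.sum_erase_eq_sub (Finset.mem_univ x), hD1]
              simp only [hsum_erase]
              rw [Finset.prod_const]
              simp [mul_comm]
          _ = ∑ x ∈ A, D x * (1 - D x) ^ m := rfl
      rw [step1]
      have hterm : ∀ x ∈ A, D x * (1 - D x) ^ m ≤ 1 / m := by
        intro x _
        have := sparse_aux_scalar (hD0 x) (hDle1 x) m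
        rw [le_div_iff₀ hmR]
        linarith
      calc ∑ x ∈ A, D x * (1 - D x) ^ m ≤ ∑ _x ∈ A, (1:ℝ) / m :=
            Finset.sum_le_sum hterm
        _ = A.card * ((1:ℝ) / m) := by rw [Finset.sum_const, nsmul_eq_mul]
        _ ≤ k * ((1:ℝ) / m) := by
            apply mul_le_mul_of_nonneg_right _ (by positivity)
            exact_mod_cast hk
        _ = (k : ℝ) / m := by ring
    -- Markov
    apply sparse_aux_markov _ _ (fun xs => Finset.prod_nonneg (fun j _ => hD0 (xs j)))
      hW1 herr_nonneg ε ((k:ℝ)/m) hε hE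
    -- k/m ≤ ε/3
    rw [div_le_div_iff₀ hmR (by norm_num : (0:ℝ) < 3)]
    have : 3 * (k:ℝ) ≤ m * ε := by
      rw [div_le_iff₀ hε] at hm
      linarith
    linarith
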